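/- Let C ∈ ℝ^{n×m} have nonnegative entries, and let a ∈ ℝ^n and b ∈ ℝ^m have nonnegative entries with ∑_i a_i = ∑_j b_j. Define UOT^λ(a, b) = inf over nonnegative matrices T of [∑_{i,j} C_{i,j} T_{i,j} + (λ/2)·‖T𝟙_m − a‖² + (λ/2)·‖Tᵀ𝟙_n − b‖²] and OT(a, b) = inf over {T nonnegative : T𝟙_m = a and Tᵀ𝟙_n = b} of ∑_{i,j} C_{i,j} T_{i,j}. Then UOT^λ(a, b) converges to OT(a, b) as λ → ∞; that is, balanced optimal transport is recovered in the limit of infinite penalty weight. -/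

import Mathlib

open Finset Filter

/-- The value of the ℓ2-penalized unbalanced optimal transport problem. -/
noncomputable def UOTL2val {n m : ℕ} (C : Matrix (Fin n) (Fin m) ℝ)
    (a : Fin n → ℝ) (b : Fin m → ℝ) (lam : ℝ) : ℝ :=
  sInf {v : ℝ | ∃ T : Matrix (Fin n) (Fin m) ℝ, (∀ i j, 0 ≤ T i j) ∧
    v = (∑ i, ∑ j, C i j * T i j)
          + lam / 2 * ∑ i, ((∑ j, T i j) - a i) ^ 2
          + lam / 2 * ∑ j, ((∑ i, T i j) - b j) ^ 2}

/-- The value of the balanced optimal transport problem. -/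
noncomputable def OTval {n m : ℕ} (C : Matrix (Fin n) (Fin m) ℝ)
    (a : Fin n → ℝ) (b : Fin m → ℝ) : ℝ :=
  sInf {v : ℝ | ∃ T : Matrix (Fin n) (Fin m) ℝ, (∀ i j, 0 ≤ T i j) ∧
    (∀ i, ∑ j, T i j = a i) ∧ (∀ j, ∑ i, T i j = b j) ∧
    v = ∑ i, ∑ j, C i j * T i j}

lemma l1_sq_le (N : ℕ) (x : Fin N → ℝ) : (∑ i, |x i|)^2 ≤ (N:ℝ) * ∑ i, (x i)^2 := by
  have h := Finset.sum_mul_sq_le_sq_mul_sq Finset.univ (fun _ => (1:ℝ)) (fun i => |x i|)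
  simp only [one_mul, one_pow, sq_abs, Finset.sum_const, Finset.card_univ, Fintype.card_fin,
    nsmul_eq_mul, mul_one] at h
  exact h

lemma quad_bound (lam Bv D P N : ℝ) (hlam : 0 < lam) (hB : 0 ≤ Bv) (hD : 0 ≤ D)
    (hP : 0 ≤ P) (hN : 0 ≤ N) (hDP : D^2 ≤ N * P) :
    -(Bv^2 * N / (2 * lam)) ≤ lam / 2 * P - Bv * D := by
  rcases eq_or_lt_of_le hN with h | h
  · have hD0 : D = 0 := by nlinarith
    rw [hD0, ← h]
    have : (0:ℝ) ≤ lam / 2 * P := mul_nonneg (by linarith) hP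
    simp
    linarith
  · have key : 0 ≤ lam^2 * N * P - 2 * lam * Bv * D * N + Bv^2 * N^2 := by
      nlinarith [sq_nonneg (lam * D - Bv * N), sq_nonneg lam]
    have heq : lam / 2 * P - Bv * D + Bv^2 * N / (2 * lam)
        = (lam^2 * N * P - 2 * lam * Bv * D * N + Bv^2 * N^2) / (2 * lam * N) := by
      field_simp
    have : 0 ≤ lam / 2 * P - Bv * D + Bv^2 * N / (2 * lam) := by
      rw [heq]
      exact div_nonneg key (by positivity)
    linarith

lemma ot_le_round {n m : ℕ} (C : Matrix (Fin n) (Fin m) ℝ)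
    (hC : ∀ i j, 0 ≤ C i j) (a : Fin n → ℝ) (b : Fin m → ℝ)
    (ha : ∀ i, 0 ≤ a i) (hb : ∀ j, 0 ≤ b j)
    (hmass : ∑ i, a i = ∑ j, b j)
    (B : ℝ) (hB0 : 0 ≤ B) (hB : ∀ i j, C i j ≤ B)
    (T : Matrix (Fin n) (Fin m) ℝ) (hT : ∀ i j, 0 ≤ T i j) :
    OTval C a b ≤ (∑ i, ∑ j, C i j * T i j)
      + B * ((∑ i, |(∑ j, T i j) - a i|) + (∑ j, |(∑ i, T i j) - b j|)) := by
  classical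
  have hr0 : ∀ i, (0:ℝ) ≤ ∑ j, T i j := fun i => Finset.sum_nonneg fun j _ => hT i j
  set α : Fin n → ℝ := fun i => min 1 (a i / (∑ j, T i j)) with hαdef
  have hα0 : ∀ i, 0 ≤ α i := fun i => le_min zero_le_one (div_nonneg (ha i) (hr0 i))
  have hα1 : ∀ i, α i ≤ 1 := fun i => min_le_left _ _
  set T1 : Matrix (Fin n) (Fin m) ℝ := fun i j => α i * T i j with hT1def
  have hT1nn : ∀ i j, 0 ≤ T1 i j := fun i j => mul_nonneg (hα0 i) (hT i j)
  have hT1le : ∀ i j, T1 i j ≤ T i j := fun i j => by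
    calc α i * T i j ≤ 1 * T i j := mul_le_mul_of_nonneg_right (hα1 i) (hT i j)
    _ = T i j := one_mul _
  have hr1 : ∀ i, (∑ j, T1 i j) = min (∑ j, T i j) (a i) := by
    intro i
    have h1 : ∑ j, T1 i j = α i * ∑ j, T i j := by
      simp [hT1def, Finset.mul_sum]
    rw [h1]
    rcases eq_or_lt_of_le (hr0 i) with h | h
    · rw [← h, mul_zero]
      exact (min_eq_left (ha i)).symm
    · rcases le_total (a i) (∑ j, T i j) with hle | hle
      · have hα' : α i = a i / (∑ j, T i j) := min_eq_right ((div_le_one h).2 hle)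
        rw [hα', div_mul_cancel₀ _ h.ne', min_eq_right hle]
      · have hα' : α i = 1 := min_eq_left ((one_le_div h).2 hle)
        rw [hα', one_mul, min_eq_left hle]
  have hc10 : ∀ j, (0:ℝ) ≤ ∑ i, T1 i j := fun j => Finset.sum_nonneg fun i _ => hT1nn i j
  have hc1le : ∀ j, (∑ i, T1 i j) ≤ ∑ i, T i j := fun j =>
    Finset.sum_le_sum fun i _ => hT1le i j
  set β : Fin m → ℝ := fun j => min 1 (b j / (∑ i, T1 i j)) with hβdef
  have hβ0 : ∀ j, 0 ≤ β j := fun j => le_min zero_le_one (div_nonneg (hb j) (hc10 j))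
  have hβ1 : ∀ j, β j ≤ 1 := fun j => min_le_left _ _
  set T2 : Matrix (Fin n) (Fin m) ℝ := fun i j => β j * T1 i j with hT2def
  have hT2nn : ∀ i j, 0 ≤ T2 i j := fun i j => mul_nonneg (hβ0 j) (hT1nn i j)
  have hT2le : ∀ i j, T2 i j ≤ T1 i j := fun i j => by
    calc β j * T1 i j ≤ 1 * T1 i j := mul_le_mul_of_nonneg_right (hβ1 j) (hT1nn i j)
    _ = T1 i j := one_mul _
  have hc2 : ∀ j, (∑ i, T2 i j) = min (∑ i, T1 i j) (b j) := by
    intro j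
    have h1 : ∑ i, T2 i j = β j * ∑ i, T1 i j := by
      simp [hT2def, Finset.mul_sum]
    rw [h1]
    rcases eq_or_lt_of_le (hc10 j) with h | h
    · rw [← h, mul_zero]
      exact (min_eq_left (hb j)).symm
    · rcases le_total (b j) (∑ i, T1 i j) with hle | hle
      · have hβ' : β j = b j / (∑ i, T1 i j) := min_eq_right ((div_le_one h).2 hle)
        rw [hβ', div_mul_cancel₀ _ h.ne', min_eq_right hle]
      · have hβ' : β j = 1 := min_eq_left ((one_le_div h).2 hle)
        rw [hβ', one_mul, min_eq_left hle]
  have hr2a : ∀ i, (∑ j, T2 i j) ≤ a i := by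
    intro i
    calc ∑ j, T2 i j ≤ ∑ j, T1 i j := Finset.sum_le_sum fun j _ => hT2le i j
    _ = min (∑ j, T i j) (a i) := hr1 i
    _ ≤ a i := min_le_right _ _
  have hc2b : ∀ j, (∑ i, T2 i j) ≤ b j := fun j => (hc2 j).trans_le (min_le_right _ _)
  set e : Fin n → ℝ := fun i => a i - ∑ j, T2 i j with hedef
  set f : Fin m → ℝ := fun j => b j - ∑ i, T2 i j with hfdef
  have he0 : ∀ i, 0 ≤ e i := fun i => sub_nonneg.2 (hr2a i)
  have hf0 : ∀ j, 0 ≤ f j := fun j => sub_nonneg.2 (hc2b j)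
  set Δ : ℝ := ∑ i, e i with hΔdef
  have hΔ0 : 0 ≤ Δ := Finset.sum_nonneg fun i _ => he0 i
  have hcomm : ∑ j, ∑ i, T2 i j = ∑ i, ∑ j, T2 i j := Finset.sum_comm
  have hΔ' : Δ = (∑ i, a i) - ∑ i, ∑ j, T2 i j := by
    simp [hΔdef, hedef, Finset.sum_sub_distrib]
  have hfs : ∑ j, f j = Δ := by
    have h1 : ∑ j, f j = (∑ j, b j) - ∑ j, ∑ i, T2 i j := by
      simp [hfdef, Finset.sum_sub_distrib]
    rw [h1, hΔ', hmass, hcomm]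
  have hdiv : ∀ i, e i * Δ / Δ = e i := by
    intro i
    rcases eq_or_ne Δ 0 with h | h
    · have hez : e i = 0 :=
        (Finset.sum_eq_zero_iff_of_nonneg (fun i _ => he0 i)).1 (hΔdef ▸ h) i (Finset.mem_univ i)
      simp [h, hez]
    · rw [mul_div_assoc, div_self h, mul_one]
  have hdiv' : ∀ j, Δ * f j / Δ = f j := by
    intro j
    rcases eq_or_ne Δ 0 with h | h
    · have hfz : f j = 0 :=
        (Finset.sum_eq_zero_iff_of_nonneg (fun j _ => hf0 j)).1 (hfs.trans h) j (Finset.mem_univ j)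
      simp [h, hfz]
    · rw [mul_comm, mul_div_assoc, div_self h, mul_one]
  set T' : Matrix (Fin n) (Fin m) ℝ := fun i j => T2 i j + e i * f j / Δ with hT'def
  have hT'nn : ∀ i j, 0 ≤ T' i j := fun i j =>
    add_nonneg (hT2nn i j) (div_nonneg (mul_nonneg (he0 i) (hf0 j)) hΔ0)
  have hrowsum : ∀ i, (∑ j, e i * f j / Δ) = e i := by
    intro i
    rw [← Finset.sum_div, ← Finset.mul_sum, hfs, hdiv i]
  have hcolsum : ∀ j, (∑ i, e i * f j / Δ) = f j := by
    intro j
    rw [← Finset.sum_div, ← Finset.sum_mul, ← hΔdef, hdiv' j]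
  have hrow : ∀ i, ∑ j, T' i j = a i := by
    intro i
    have h1 : ∑ j, T' i j = (∑ j, T2 i j) + ∑ j, e i * f j / Δ := by
      simp [hT'def, Finset.sum_add_distrib]
    rw [h1, hrowsum i, hedef]
    ring
  have hcol : ∀ j, ∑ i, T' i j = b j := by
    intro j
    have h1 : ∑ i, T' i j = (∑ i, T2 i j) + ∑ i, e i * f j / Δ := by
      simp [hT'def, Finset.sum_add_distrib]
    rw [h1, hcolsum j, hfdef]
    ring
  -- cost bound
  have hcost : ∑ i, ∑ j, C i j * T' i j ≤ (∑ i, ∑ j, C i j * T i j) + B * Δ := by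
    have h1 : ∑ i, ∑ j, C i j * T' i j
        = (∑ i, ∑ j, C i j * T2 i j) + ∑ i, ∑ j, C i j * (e i * f j / Δ) := by
      simp [hT'def, mul_add, Finset.sum_add_distrib]
    have h2 : ∑ i, ∑ j, C i j * T2 i j ≤ ∑ i, ∑ j, C i j * T i j :=
      Finset.sum_le_sum fun i _ => Finset.sum_le_sum fun j _ =>
        mul_le_mul_of_nonneg_left ((hT2le i j).trans (hT1le i j)) (hC i j)
    have h3 : ∑ i, ∑ j, C i j * (e i * f j / Δ) ≤ ∑ i, ∑ j, B * (e i * f j / Δ) :=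
      Finset.sum_le_sum fun i _ => Finset.sum_le_sum fun j _ =>
        mul_le_mul_of_nonneg_right (hB i j)
          (div_nonneg (mul_nonneg (he0 i) (hf0 j)) hΔ0)
    have h4 : ∑ i, ∑ j, B * (e i * f j / Δ) = B * Δ := by
      have h5 : ∑ i, ∑ j, e i * f j / Δ = Δ := by
        rw [Finset.sum_congr rfl fun i _ => hrowsum i]
      calc ∑ i, ∑ j, B * (e i * f j / Δ) = B * ∑ i, ∑ j, e i * f j / Δ := by
            simp [Finset.mul_sum]
        _ = B * Δ := by rw [h5]
    linarith
  -- Δ bound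
  have hΔle : Δ ≤ (∑ i, |(∑ j, T i j) - a i|) + (∑ j, |(∑ i, T i j) - b j|) := by
    have hm1 : ∀ i, a i - |(∑ j, T i j) - a i| ≤ min (∑ j, T i j) (a i) := by
      intro i
      rcases le_total (∑ j, T i j) (a i) with h | h
      · rw [min_eq_left h]
        have := neg_abs_le ((∑ j, T i j) - a i)
        linarith
      · rw [min_eq_right h]
        linarith [abs_nonneg ((∑ j, T i j) - a i)]
    have hm2 : ∀ j, (∑ i, T1 i j) - |(∑ i, T i j) - b j| ≤ min (∑ i, T1 i j) (b j) := by
      intro j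
      rcases le_total (∑ i, T1 i j) (b j) with h | h
      · rw [min_eq_left h]
        linarith [abs_nonneg ((∑ i, T i j) - b j)]
      · rw [min_eq_right h]
        have := le_abs_self ((∑ i, T i j) - b j)
        linarith [hc1le j]
    have hmassT1 : ∑ j, ∑ i, T1 i j = ∑ i, min (∑ j, T i j) (a i) := by
      rw [Finset.sum_comm]
      exact Finset.sum_congr rfl fun i _ => hr1 i
    have hΔ2 : Δ = (∑ i, a i) - ∑ j, min (∑ i, T1 i j) (b j) := by
      rw [hΔ', ← hcomm]
      congr 1
      exact Finset.sum_congr rfl fun j _ => hc2 j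
    have h6 : (∑ j, ∑ i, T1 i j) - (∑ j, |(∑ i, T i j) - b j|) ≤ ∑ j, min (∑ i, T1 i j) (b j) := by
      have := Finset.sum_le_sum fun j (_ : j ∈ Finset.univ) => hm2 j
      rw [Finset.sum_sub_distrib] at this
      exact this
    have h7 : (∑ i, a i) - (∑ i, |(∑ j, T i j) - a i|) ≤ ∑ i, min (∑ j, T i j) (a i) := by
      have := Finset.sum_le_sum fun i (_ : i ∈ Finset.univ) => hm1 i
      rw [Finset.sum_sub_distrib] at this
      exact this
    rw [hΔ2]
    linarith [hmassT1 ▸ h6]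
  have hbdd : BddBelow {v : ℝ | ∃ T : Matrix (Fin n) (Fin m) ℝ, (∀ i j, 0 ≤ T i j) ∧
      (∀ i, ∑ j, T i j = a i) ∧ (∀ j, ∑ i, T i j = b j) ∧
      v = ∑ i, ∑ j, C i j * T i j} := by
    refine ⟨0, ?_⟩
    rintro v ⟨S, hS, -, -, rfl⟩
    exact Finset.sum_nonneg fun i _ => Finset.sum_nonneg fun j _ => mul_nonneg (hC i j) (hS i j)
  have hmem : (∑ i, ∑ j, C i j * T' i j) ∈ {v : ℝ | ∃ T : Matrix (Fin n) (Fin m) ℝ,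
      (∀ i j, 0 ≤ T i j) ∧ (∀ i, ∑ j, T i j = a i) ∧ (∀ j, ∑ i, T i j = b j) ∧
      v = ∑ i, ∑ j, C i j * T i j} := ⟨T', hT'nn, hrow, hcol, rfl⟩
  calc OTval C a b ≤ ∑ i, ∑ j, C i j * T' i j := csInf_le hbdd hmem
    _ ≤ (∑ i, ∑ j, C i j * T i j) + B * Δ := hcost
    _ ≤ _ := by
        have := mul_le_mul_of_nonneg_left hΔle hB0
        linarith

/-- ℓ2-penalized UOT recovers balanced OT in the limit of infinite penalty:
`UOT^λ(a,b) → OT(a,b)` as `λ → ∞`, for nonnegative data with equal total mass. -/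
theorem uot_tendsto_ot {n m : ℕ} (C : Matrix (Fin n) (Fin m) ℝ)
    (hC : ∀ i j, 0 ≤ C i j) (a : Fin n → ℝ) (b : Fin m → ℝ)
    (ha : ∀ i, 0 ≤ a i) (hb : ∀ j, 0 ≤ b j)
    (hmass : ∑ i, a i = ∑ j, b j) :
    Tendsto (fun lam : ℝ => UOTL2val C a b lam) atTop (nhds (OTval C a b)) := by
  classical
  have hB0 : (0:ℝ) ≤ ∑ i, ∑ j, C i j :=
    Finset.sum_nonneg fun i _ => Finset.sum_nonneg fun j _ => hC i j
  set B : ℝ := ∑ i, ∑ j, C i j with hBdef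
  have hB : ∀ i j, C i j ≤ B := by
    intro i j
    calc C i j ≤ ∑ j', C i j' :=
          Finset.single_le_sum (fun j' _ => hC i j') (Finset.mem_univ j)
      _ ≤ B := Finset.single_le_sum (f := fun i' => ∑ j', C i' j')
          (fun i' _ => Finset.sum_nonneg fun j' _ => hC i' j') (Finset.mem_univ i)
  -- the feasible product coupling
  have hM0 : (0:ℝ) ≤ ∑ i, a i := Finset.sum_nonneg fun i _ => ha i
  set T0 : Matrix (Fin n) (Fin m) ℝ := fun i j => a i * b j / (∑ i', a i') with hT0def
  have hT0nn : ∀ i j, 0 ≤ T0 i j := fun i j =>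
    div_nonneg (mul_nonneg (ha i) (hb j)) hM0
  have hT0row : ∀ i, ∑ j, T0 i j = a i := by
    intro i
    have h1 : ∑ j, T0 i j = a i * (∑ i', a i') / (∑ i', a i') := by
      simp only [hT0def]
      rw [← Finset.sum_div, ← Finset.mul_sum, ← hmass]
    rw [h1]
    rcases eq_or_ne (∑ i', a i') 0 with h | h
    · have haz : a i = 0 :=
        (Finset.sum_eq_zero_iff_of_nonneg (fun i' _ => ha i')).1 h i (Finset.mem_univ i)
      simp [h, haz]
    · rw [mul_div_assoc, div_self h, mul_one]
  have hT0col : ∀ j, ∑ i, T0 i j = b j := by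
    intro j
    have h1 : ∑ i, T0 i j = (∑ i', a i') * b j / (∑ i', a i') := by
      simp only [hT0def]
      rw [← Finset.sum_div, ← Finset.sum_mul]
    rw [h1]
    rcases eq_or_ne (∑ i', a i') 0 with h | h
    · have hbz : b j = 0 :=
        (Finset.sum_eq_zero_iff_of_nonneg (fun j' _ => hb j')).1 (hmass ▸ h) j (Finset.mem_univ j)
      simp [h, hbz]
    · rw [mul_comm, mul_div_assoc, div_self h, mul_one]
  have otne : Set.Nonempty {v : ℝ | ∃ T : Matrix (Fin n) (Fin m) ℝ, (∀ i j, 0 ≤ T i j) ∧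
      (∀ i, ∑ j, T i j = a i) ∧ (∀ j, ∑ i, T i j = b j) ∧
      v = ∑ i, ∑ j, C i j * T i j} := ⟨_, T0, hT0nn, hT0row, hT0col, rfl⟩
  -- upper bound
  have hupper : ∀ lam : ℝ, 0 ≤ lam → UOTL2val C a b lam ≤ OTval C a b := by
    intro lam hlam
    rw [OTval]
    apply le_csInf otne
    rintro v ⟨T, hTnn, hrow, hcol, rfl⟩
    have hbdd : BddBelow {v : ℝ | ∃ T : Matrix (Fin n) (Fin m) ℝ, (∀ i j, 0 ≤ T i j) ∧
        v = (∑ i, ∑ j, C i j * T i j)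
          + lam / 2 * ∑ i, ((∑ j, T i j) - a i) ^ 2
          + lam / 2 * ∑ j, ((∑ i, T i j) - b j) ^ 2} := by
      refine ⟨0, ?_⟩
      rintro v ⟨S, hS, rfl⟩
      have h1 : (0:ℝ) ≤ ∑ i, ∑ j, C i j * S i j :=
        Finset.sum_nonneg fun i _ => Finset.sum_nonneg fun j _ => mul_nonneg (hC i j) (hS i j)
      have h2 : (0:ℝ) ≤ lam / 2 * ∑ i, ((∑ j, S i j) - a i) ^ 2 :=
        mul_nonneg (by linarith) (Finset.sum_nonneg fun i _ => sq_nonneg _)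
      have h3 : (0:ℝ) ≤ lam / 2 * ∑ j, ((∑ i, S i j) - b j) ^ 2 :=
        mul_nonneg (by linarith) (Finset.sum_nonneg fun j _ => sq_nonneg _)
      linarith
    have hmem : (∑ i, ∑ j, C i j * T i j) ∈ {v : ℝ | ∃ T : Matrix (Fin n) (Fin m) ℝ,
        (∀ i j, 0 ≤ T i j) ∧
        v = (∑ i, ∑ j, C i j * T i j)
          + lam / 2 * ∑ i, ((∑ j, T i j) - a i) ^ 2
          + lam / 2 * ∑ j, ((∑ i, T i j) - b j) ^ 2} := by
      refine ⟨T, hTnn, ?_⟩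
      simp [hrow, hcol]
    exact csInf_le hbdd hmem
  -- lower bound
  have hlower : ∀ lam : ℝ, 0 < lam →
      OTval C a b - B^2 * ((n:ℝ) + (m:ℝ)) / (2 * lam) ≤ UOTL2val C a b lam := by
    intro lam hlam
    rw [UOTL2val]
    apply le_csInf
    · exact ⟨_, 0, fun i j => le_refl 0, rfl⟩
    rintro v ⟨T, hTnn, rfl⟩
    have hround := ot_le_round C hC a b ha hb hmass B hB0 hB T hTnn
    have hD1 := l1_sq_le n (fun i => (∑ j, T i j) - a i)
    have hD2 := l1_sq_le m (fun j => (∑ i, T i j) - b j)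
    have hq1 := quad_bound lam B (∑ i, |(∑ j, T i j) - a i|) (∑ i, ((∑ j, T i j) - a i)^2)
      (n:ℝ) hlam hB0 (Finset.sum_nonneg fun i _ => abs_nonneg _)
      (Finset.sum_nonneg fun i _ => sq_nonneg _) (Nat.cast_nonneg n) hD1
    have hq2 := quad_bound lam B (∑ j, |(∑ i, T i j) - b j|) (∑ j, ((∑ i, T i j) - b j)^2)
      (m:ℝ) hlam hB0 (Finset.sum_nonneg fun j _ => abs_nonneg _)
      (Finset.sum_nonneg fun j _ => sq_nonneg _) (Nat.cast_nonneg m) hD2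
    have hsplit : B^2 * ((n:ℝ) + (m:ℝ)) / (2 * lam)
        = B^2 * (n:ℝ) / (2 * lam) + B^2 * (m:ℝ) / (2 * lam) := by ring
    rw [hsplit]
    linarith
  -- squeeze
  have h0 : Tendsto (fun lam : ℝ => B^2 * ((n:ℝ) + (m:ℝ)) / (2 * lam)) atTop (nhds 0) :=
    Tendsto.div_atTop tendsto_const_nhds
      (Tendsto.const_mul_atTop two_pos tendsto_id)
  have hK : Tendsto (fun lam : ℝ => OTval C a b - B^2 * ((n:ℝ) + (m:ℝ)) / (2 * lam))
      atTop (nhds (OTval C a b)) := by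
    have := tendsto_const_nhds (x := OTval C a b) (f := atTop (α := ℝ)) |>.sub h0
    simpa using this
  refine tendsto_of_tendsto_of_tendsto_of_le_of_le' hK tendsto_const_nhds ?_ ?_
  · filter_upwards [eventually_gt_atTop 0] with lam hlam using hlower lam hlam
  · filter_upwards [eventually_ge_atTop 0] with lam hlam using hupper lam hlam
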